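/- For any n ≥ 30, every graph G on n vertices with minimum degree δ(G) ≥ ⌊n/2⌋ + 1 has a percolating set of size 3 in 3-neighbour bootstrap percolation: m(G, 3) = 3. -/

import Mathlib

open Finset

open scoped Classical

noncomputable section

variable {V : Type*}

/-- Number of neighbours of `v` inside the set `A`. -/
def nbrsIn (G : SimpleGraph V) (A : Finset V) (v : V) : ℕ :=
  (A.filter (fun u => G.Adj v u)).card

/-- One step of the `r`-neighbour bootstrap process. -/
def bootStep [Fintype V] (G : SimpleGraph V) (r : ℕ) (A : Finset V) : Finset V :=
  A ∪ Finset.univ.filter (fun v => r ≤ nbrsIn G A v)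

/-- The sets `A_t` of the `r`-neighbour bootstrap process started at `A`. -/
def bootSeq [Fintype V] (G : SimpleGraph V) (r : ℕ) (A : Finset V) : ℕ → Finset V
  | 0 => A
  | t + 1 => bootStep G r (bootSeq G r A t)

/-- `A` is closed under the `r`-neighbour bootstrap rule. -/
def BootClosed (G : SimpleGraph V) (r : ℕ) (A : Finset V) : Prop :=
  ∀ v, r ≤ nbrsIn G A v → v ∈ A

/-- The `r`-neighbour bootstrap closure `⟨A⟩_r`: the smallest closed superset of `A`. -/
def bootClosure [Fintype V] (G : SimpleGraph V) (r : ℕ) (A : Finset V) : Finset V :=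
  Finset.univ.filter (fun v => ∀ B : Finset V, A ⊆ B → BootClosed G r B → v ∈ B)

/-- `m(G, r)`: the minimum size of a percolating set. -/
def minPerc [Fintype V] (G : SimpleGraph V) (r : ℕ) : ℕ :=
  sInf {k | ∃ A : Finset V, A.card = k ∧ bootClosure G r A = Finset.univ}

end

/-! Write `d = ⌊n/2⌋`, so that every degree is at least `d + 1` and `n ≤ 2d + 1`. Double counting
shows that a closed set `C` of the 3-neighbour process has at most four or at least `d` vertices,
and that `Cᶜ` has at least `d` vertices unless it is empty. Three neighbours of a suitable vertex
infect five vertices, so if no triple percolated, the closure `A` of such a triple would be a closed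
set with `|A|, |Aᶜ| ≥ d`, and `Y = Aᶜ`, whose vertices have at most two neighbours outside `Y`,
would be nearly a clique. Then any `x ∉ Y` with two neighbours in `Y`, together with two suitable
vertices of `Y`, infects all of `Y`; as this closure has at most `n - d` vertices, it is `Y ∪ {x}`, and
the graph is forced into a rigid shape: `n = 2d + 1`, and `Y` and `(Y ∪ {x})ᶜ` are `d`-cliques
each of whose vertices has exactly two neighbours outside its clique. In that shape some triple
containing `x` infects `d + 2 > n - d` vertices. -/

section

variable {V : Type*} {G : SimpleGraph V}

lemma card_add_two_le_of_mem {T C : Finset V} {x y : V} (hT : T ⊆ C) (hx : x ∈ C) (hy : y ∈ C)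
    (hxT : x ∉ T) (hyT : y ∉ T) (hxy : x ≠ y) : T.card + 2 ≤ C.card := by
  have hyxT : y ∉ insert x T := by simp [hyT, hxy.symm]
  calc T.card + 2 = (insert y (insert x T)).card := by
        rw [card_insert_of_notMem hyxT, card_insert_of_notMem hxT]
    _ ≤ C.card := card_le_card (insert_subset hy (insert_subset hx hT))

lemma card_compl_insert [Fintype V] {Y : Finset V} {x : V} (hx : x ∉ Y) :
    (insert x Y)ᶜ.card + Y.card + 1 = Fintype.card V := by
  rw [add_assoc, ← card_insert_of_notMem hx, card_compl_add_card]

section nbrsIn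

lemma nbrsIn_mono {S T : Finset V} (h : S ⊆ T) (v : V) : nbrsIn G S v ≤ nbrsIn G T v :=
  card_le_card (filter_subset_filter _ h)

lemma nbrsIn_le_card (S : Finset V) (v : V) : nbrsIn G S v ≤ S.card :=
  card_le_card (filter_subset _ _)

lemma filter_adj_subset_erase (S : Finset V) (v : V) :
    S.filter (fun u => G.Adj v u) ⊆ S.erase v := fun _ hu =>
  mem_erase.2 ⟨(G.ne_of_adj (mem_filter.1 hu).2).symm, (mem_filter.1 hu).1⟩

lemma nbrsIn_lt_card {S : Finset V} {v : V} (hv : v ∈ S) : nbrsIn G S v < S.card :=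
  (card_le_card (filter_adj_subset_erase S v)).trans_lt (card_erase_lt_of_mem hv)

lemma nbrsIn_insert {S : Finset V} {x : V} (hx : x ∉ S) (v : V) :
    nbrsIn G (insert x S) v = nbrsIn G S v + if G.Adj v x then 1 else 0 := by
  unfold nbrsIn
  rw [filter_insert]
  split_ifs with h
  · exact card_insert_of_notMem fun hc => hx (mem_filter.1 hc).1
  · rfl

lemma three_le_nbrsIn {C : Finset V} {v a b c : V} (ha : a ∈ C) (hb : b ∈ C) (hc : c ∈ C)
    (hab : a ≠ b) (hac : a ≠ c) (hbc : b ≠ c)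
    (hva : G.Adj v a) (hvb : G.Adj v b) (hvc : G.Adj v c) : 3 ≤ nbrsIn G C v := by
  have h : {a, b, c} ⊆ C.filter (fun u => G.Adj v u) := by
    simp only [insert_subset_iff, singleton_subset_iff, mem_filter]
    exact ⟨⟨ha, hva⟩, ⟨hb, hvb⟩, ⟨hc, hvc⟩⟩
  exact (card_eq_three.2 ⟨a, b, c, hab, hac, hbc, rfl⟩).ge.trans (card_le_card h)

lemma isClique_of_card_le_nbrsIn_add_one {S : Finset V}
    (hS : ∀ v ∈ S, S.card ≤ nbrsIn G S v + 1) : G.IsClique (S : Set V) := by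
  intro v hv w hw hvw
  have hfilter : S.filter (fun u => G.Adj v u) = S.erase v :=
    eq_of_subset_of_card_le (filter_adj_subset_erase S v)
      (by rw [card_erase_of_mem hv]; have := hS v hv; unfold nbrsIn at this; omega)
  have hw' : w ∈ S.erase v := mem_erase.2 ⟨Ne.symm hvw, hw⟩
  rw [← hfilter] at hw'
  exact (mem_filter.1 hw').2

lemma SimpleGraph.IsClique.card_le_nbrsIn_add_one {S : Finset V} (hS : G.IsClique (S : Set V))
    {v : V} (hv : v ∈ S) : S.card ≤ nbrsIn G S v + 1 := by
  have hsub : S.erase v ⊆ S.filter (fun u => G.Adj v u) := fun u hu =>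
    mem_filter.2 ⟨(mem_erase.1 hu).2, hS hv (mem_erase.1 hu).2 (mem_erase.1 hu).1.symm⟩
  have := card_le_card hsub
  rw [card_erase_of_mem hv] at this
  unfold nbrsIn
  omega

lemma sum_nbrsIn_comm (S T : Finset V) :
    ∑ a ∈ S, nbrsIn G T a = ∑ b ∈ T, nbrsIn G S b := by
  simp only [nbrsIn, card_filter]
  rw [sum_comm]
  simp only [G.adj_comm]

variable [Fintype V]

lemma nbrsIn_add_nbrsIn_compl (S : Finset V) (v : V) :
    nbrsIn G S v + nbrsIn G Sᶜ v = G.degree v := by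
  unfold nbrsIn
  rw [← card_union_of_disjoint (disjoint_filter_filter disjoint_compl_right), ← filter_union,
    union_compl, ← SimpleGraph.neighborFinset_eq_filter]
  rfl

lemma mul_card_le_sum_nbrsIn {k : ℕ} (hk : k ≤ G.minDegree) (S : Finset V) :
    k * S.card ≤ ∑ v, nbrsIn G S v := by
  have hdeg : ∀ a, nbrsIn G univ a = G.degree a := fun a => by
    simpa [nbrsIn] using nbrsIn_add_nbrsIn_compl (G := G) univ a
  calc k * S.card = ∑ _a ∈ S, k := by rw [sum_const, smul_eq_mul, mul_comm]
    _ ≤ ∑ a ∈ S, nbrsIn G univ a :=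
        sum_le_sum fun a _ => (hdeg a).symm ▸ hk.trans (G.minDegree_le_degree a)
    _ = ∑ v, nbrsIn G S v := sum_nbrsIn_comm S univ

end nbrsIn

section closure

variable {r : ℕ}

lemma BootClosed.nbrsIn_lt {C : Finset V} (hC : BootClosed G r C) {v : V} (hv : v ∉ C) :
    nbrsIn G C v < r :=
  lt_of_not_ge fun h => hv (hC v h)

lemma BootClosed.mem_of_adj {C : Finset V} (hC : BootClosed G 3 C) {v a b c : V}
    (ha : a ∈ C) (hb : b ∈ C) (hc : c ∈ C) (hab : a ≠ b) (hac : a ≠ c) (hbc : b ≠ c)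
    (hva : G.Adj v a) (hvb : G.Adj v b) (hvc : G.Adj v c) : v ∈ C :=
  hC v (three_le_nbrsIn ha hb hc hab hac hbc hva hvb hvc)

/-- A vertex of `Y` sees at least three of any four other vertices of `Y`. -/
lemma BootClosed.subset_of_four_le_card_inter {C Y : Finset V} (hC : BootClosed G 3 C)
    (hY : ∀ z ∈ Y, Y.card ≤ nbrsIn G Y z + 2) (h4 : 4 ≤ (Y ∩ C).card) : Y ⊆ C := by
  intro z hz
  by_contra hzC
  have hmiss : ((Y ∩ C).filter (fun u => ¬ G.Adj z u)).card ≤ 1 := by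
    have hsub : (Y ∩ C).filter (fun u => ¬ G.Adj z u) ⊆
        Y.erase z \ Y.filter (fun u => G.Adj z u) := fun u hu => by
      simp only [mem_filter, mem_inter] at hu
      exact mem_sdiff.2 ⟨mem_erase.2 ⟨fun h => hzC (h ▸ hu.1.2), hu.1.1⟩,
        fun h => hu.2 (mem_filter.1 h).2⟩
    have := card_le_card hsub
    rw [card_sdiff_of_subset (filter_adj_subset_erase Y z), card_erase_of_mem hz] at this
    have := hY z hz
    unfold nbrsIn at this
    omega
  have hsee : ((Y ∩ C).filter (fun u => G.Adj z u)).card ≤ nbrsIn G C z :=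
    card_le_card (filter_subset_filter _ inter_subset_right)
  have := card_filter_add_card_filter_not (s := Y ∩ C) (fun u => G.Adj z u)
  exact hzC (hC z (by omega))

variable [Fintype V]

lemma subset_bootClosure (A : Finset V) : A ⊆ bootClosure G r A := fun _ hv =>
  mem_filter.2 ⟨mem_univ _, fun _ hAB _ => hAB hv⟩

lemma bootClosure_subset {A B : Finset V} (hAB : A ⊆ B) (hB : BootClosed G r B) :
    bootClosure G r A ⊆ B := fun _ hv => (mem_filter.1 hv).2 B hAB hB

lemma bootClosed_bootClosure (A : Finset V) : BootClosed G r (bootClosure G r A) :=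
  fun v hv => mem_filter.2 ⟨mem_univ _, fun _ hAB hB =>
    hB v (hv.trans (nbrsIn_mono (bootClosure_subset hAB hB) v))⟩

lemma minPerc_le {A : Finset V} (hA : bootClosure G r A = univ) : minPerc G r ≤ A.card :=
  Nat.sInf_le ⟨A, rfl, hA⟩

lemma le_minPerc (hr : r ≤ Fintype.card V) : r ≤ minPerc G r := by
  obtain ⟨A, hAcard, hA⟩ : minPerc G r ∈
      {k | ∃ A : Finset V, A.card = k ∧ bootClosure G r A = univ} :=
    Nat.sInf_mem ⟨_, univ, rfl, univ_subset_iff.1 (subset_bootClosure univ)⟩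
  by_contra! hlt
  have hAclosed : BootClosed G r A := fun v hv => absurd (hv.trans (nbrsIn_le_card A v)) (by omega)
  have hAuniv : A = univ := univ_subset_iff.1 (hA ▸ bootClosure_subset subset_rfl hAclosed)
  rw [hAuniv, card_univ] at hAcard
  omega

end closure

section infection

variable [Fintype V]

/-- `{a, b, c}` infects `x`, and then `w`. -/
lemma five_le_card_bootClosure {x w a b c : V} (hab : a ≠ b) (hac : a ≠ c) (hbc : b ≠ c)
    (hxa : G.Adj x a) (hxb : G.Adj x b) (hxc : G.Adj x c) (hwa : G.Adj w a) (hwb : G.Adj w b)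
    (hw : G.Adj w x ∨ G.Adj w c) (hwc : w ≠ c) (hwx : w ≠ x) :
    5 ≤ (bootClosure G 3 {a, b, c}).card := by
  have hC := bootClosed_bootClosure (G := G) (r := 3) {a, b, c}
  have hT := subset_bootClosure (G := G) (r := 3) {a, b, c}
  have haC : a ∈ bootClosure G 3 {a, b, c} := hT (by simp)
  have hbC : b ∈ bootClosure G 3 {a, b, c} := hT (by simp)
  have hxC := hC.mem_of_adj haC hbC (hT (by simp)) hab hac hbc hxa hxb hxc
  have hwC : w ∈ bootClosure G 3 {a, b, c} := by
    rcases hw with hwx' | hwc'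
    · exact hC.mem_of_adj haC hbC hxC hab (G.ne_of_adj hxa).symm (G.ne_of_adj hxb).symm
        hwa hwb hwx'
    · exact hC.mem_of_adj haC hbC (hT (by simp)) hab hac hbc hwa hwb hwc'
  have hxT : x ∉ ({a, b, c} : Finset V) := by
    simp [G.ne_of_adj hxa, G.ne_of_adj hxb, G.ne_of_adj hxc]
  have hwT : w ∉ ({a, b, c} : Finset V) := by
    simp [G.ne_of_adj hwa, G.ne_of_adj hwb, hwc]
  have := card_add_two_le_of_mem hT hxC hwC hxT hwT hwx.symm
  rwa [card_eq_three.2 ⟨a, b, c, hab, hac, hbc, rfl⟩] at this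

/-- Two neighbours `y₁, c ∈ Y` of `x` have two common neighbours `y₂, y₃ ∈ Y`; the triple
`{x, y₂, y₃}` infects `y₁` and `c`, and four infected vertices of `Y` infect all of `Y`. -/
lemma exists_card_eq_three_insert_subset_bootClosure {Y : Finset V} {x : V}
    (hY6 : 6 ≤ Y.card) (hY : ∀ y ∈ Y, Y.card ≤ nbrsIn G Y y + 2) (hx : x ∉ Y)
    (hx2 : 2 ≤ nbrsIn G Y x) : ∃ T : Finset V, T.card = 3 ∧ insert x Y ⊆ bootClosure G 3 T := by
  obtain ⟨y₁, hy₁, c, hc, hy₁c⟩ := one_lt_card.1 hx2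
  rw [mem_filter] at hy₁ hc
  have hF : 2 ≤ (Y.filter (fun u => G.Adj y₁ u) ∩ Y.filter (fun u => G.Adj c u)).card := by
    have h1 := hY y₁ hy₁.1
    have h2 := hY c hc.1
    have := card_union_add_card_inter (Y.filter (fun u => G.Adj y₁ u))
      (Y.filter (fun u => G.Adj c u))
    have := card_le_card (union_subset (filter_subset (fun u => G.Adj y₁ u) Y)
      (filter_subset (fun u => G.Adj c u) Y))
    unfold nbrsIn at h1 h2
    omega
  obtain ⟨y₂, hy₂, y₃, hy₃, hy₂₃⟩ := one_lt_card.1 hF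
  simp only [mem_inter, mem_filter] at hy₂ hy₃
  set C := bootClosure G 3 {x, y₂, y₃}
  have hC := bootClosed_bootClosure (G := G) (r := 3) {x, y₂, y₃}
  have hT := subset_bootClosure (G := G) (r := 3) {x, y₂, y₃}
  have hxC : x ∈ C := hT (by simp)
  have hy₂C : y₂ ∈ C := hT (by simp)
  have hy₃C : y₃ ∈ C := hT (by simp)
  have hxy₂ : x ≠ y₂ := fun h => hx (h ▸ hy₂.1.1)
  have hxy₃ : x ≠ y₃ := fun h => hx (h ▸ hy₃.1.1)
  have hy₁C : y₁ ∈ C := hC.mem_of_adj hxC hy₂C hy₃C hxy₂ hxy₃ hy₂₃ hy₁.2.symm hy₂.1.2 hy₃.1.2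
  have hcC : c ∈ C := hC.mem_of_adj hxC hy₂C hy₃C hxy₂ hxy₃ hy₂₃ hc.2.symm hy₂.2.2 hy₃.2.2
  have h4 : 4 ≤ (Y ∩ C).card := by
    have hsub : {y₁, c, y₂, y₃} ⊆ Y ∩ C := by
      simp only [insert_subset_iff, singleton_subset_iff, mem_inter]
      exact ⟨⟨hy₁.1, hy₁C⟩, ⟨hc.1, hcC⟩, ⟨hy₂.1.1, hy₂C⟩, ⟨hy₃.1.1, hy₃C⟩⟩
    have hy₁T : y₁ ∉ ({c, y₂, y₃} : Finset V) := by
      simp only [mem_insert, mem_singleton, not_or]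
      exact ⟨hy₁c, G.ne_of_adj hy₂.1.2, G.ne_of_adj hy₃.1.2⟩
    have := card_eq_three.2 ⟨c, y₂, y₃, G.ne_of_adj hy₂.2.2, G.ne_of_adj hy₃.2.2, hy₂₃, rfl⟩
    have := card_le_card hsub
    rw [card_insert_of_notMem hy₁T] at this
    omega
  exact ⟨_, card_eq_three.2 ⟨x, y₂, y₃, hxy₂, hxy₃, hy₂₃, rfl⟩,
    insert_subset hxC (hC.subset_of_four_le_card_inter hY h4)⟩

/-- `w` is infected by `{x, u, y}`, then every neighbour of `x` in `Y` by `{x, w, y}`. -/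
lemma exists_card_eq_three_insert_insert_subset_bootClosure {Y : Finset V}
    (hY : G.IsClique (Y : Set V)) {x u w : V} (hx : x ∉ Y) (hu : u ∉ Y) (hxu : x ≠ u) (hw : w ∈ Y)
    (hxw : G.Adj x w) (huw : G.Adj u w) (h4 : 4 ≤ nbrsIn G Y x) :
    ∃ T : Finset V, T.card = 3 ∧ insert x (insert u Y) ⊆ bootClosure G 3 T := by
  obtain ⟨y, hy⟩ : (Y.erase w).Nonempty := by
    rw [← card_pos, card_erase_of_mem hw]
    have := nbrsIn_le_card (G := G) Y x
    omega
  obtain ⟨hyw, hyY⟩ := mem_erase.1 hy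
  have hxy : x ≠ y := fun h => hx (h ▸ hyY)
  have huy : u ≠ y := fun h => hu (h ▸ hyY)
  set C := bootClosure G 3 {x, u, y}
  have hC := bootClosed_bootClosure (G := G) (r := 3) {x, u, y}
  have hT := subset_bootClosure (G := G) (r := 3) {x, u, y}
  have hxC : x ∈ C := hT (by simp)
  have huC : u ∈ C := hT (by simp)
  have hyC : y ∈ C := hT (by simp)
  have hwC : w ∈ C := hC.mem_of_adj hxC huC hyC hxu hxy huy hxw.symm huw.symm (hY hw hyY hyw.symm)
  have hwx : w ≠ x := fun h => hx (h ▸ hw)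
  have hNC : Y.filter (fun z => G.Adj x z) ⊆ Y ∩ C := by
    intro z hz
    rw [mem_filter] at hz
    refine mem_inter.2 ⟨hz.1, ?_⟩
    by_cases hzw : z = w
    · exact hzw ▸ hwC
    by_cases hzy : z = y
    · exact hzy ▸ hyC
    exact hC.mem_of_adj hwC hyC hxC (Ne.symm hyw) hwx hxy.symm (hY hz.1 hw hzw)
      (hY hz.1 hyY hzy) hz.2.symm
  have hYC : Y ⊆ C := hC.subset_of_four_le_card_inter
    (fun z hz => (hY.card_le_nbrsIn_add_one hz).trans (Nat.le_succ _))
    (h4.trans (card_le_card hNC))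
  exact ⟨_, card_eq_three.2 ⟨x, u, y, hxu, hxy, huy, rfl⟩,
    insert_subset hxC (insert_subset huC hYC)⟩

end infection

section dense

variable [Fintype V] {d : ℕ}

lemma BootClosed.card_add_le (hδ : d + 1 ≤ G.minDegree) {C : Finset V} (hC : BootClosed G 3 C)
    (hne : C ≠ univ) : C.card + d ≤ Fintype.card V := by
  obtain ⟨u, hu⟩ := not_forall.1 fun h => hne (eq_univ_of_forall h)
  have h1 := hC.nbrsIn_lt hu
  have h2 := nbrsIn_lt_card (G := G) (mem_compl.2 hu)
  have h3 := nbrsIn_add_nbrsIn_compl (G := G) C u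
  have h4 := hδ.trans (G.minDegree_le_degree u)
  have h5 := card_compl C
  omega

lemma BootClosed.nbrsIn_eq_two (hδ : d + 1 ≤ G.minDegree) {C : Finset V}
    (hC : BootClosed G 3 C) (hCc : Cᶜ.card ≤ d) {u : V} (hu : u ∉ C) : nbrsIn G C u = 2 := by
  have h1 := hC.nbrsIn_lt hu
  have h2 := nbrsIn_lt_card (G := G) (mem_compl.2 hu)
  have h3 := nbrsIn_add_nbrsIn_compl (G := G) C u
  have h4 := hδ.trans (G.minDegree_le_degree u)
  omega

lemma BootClosed.isClique_compl (hδ : d + 1 ≤ G.minDegree) {C : Finset V}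
    (hC : BootClosed G 3 C) (hCc : Cᶜ.card ≤ d) : G.IsClique ((Cᶜ : Finset V) : Set V) := by
  refine isClique_of_card_le_nbrsIn_add_one fun u hu => ?_
  have h1 := hC.nbrsIn_eq_two hδ hCc (mem_compl.1 hu)
  have h2 := nbrsIn_add_nbrsIn_compl (G := G) C u
  have h3 := hδ.trans (G.minDegree_le_degree u)
  omega

/-- Double counting the edges at `C` gives `(d + 1)|C| ≤ |C|(|C| - 1) + 2(n - |C|)`, which fails
for `5 ≤ |C| < d` when `n ≤ 2d + 1`. -/
lemma BootClosed.card_le_four_or_le_card (hδ : d + 1 ≤ G.minDegree)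
    (hn : Fintype.card V ≤ 2 * d + 1) (hd : 8 ≤ d) {C : Finset V} (hC : BootClosed G 3 C) :
    C.card ≤ 4 ∨ d ≤ C.card := by
  set k := C.card
  have hin : ∑ v ∈ C, nbrsIn G C v ≤ k * (k - 1) := by
    simpa using sum_le_card_nsmul C _ _ fun v hv =>
      Nat.le_sub_one_of_lt (nbrsIn_lt_card (G := G) hv)
  have hout : ∑ v ∈ Cᶜ, nbrsIn G C v ≤ Cᶜ.card * 2 := by
    simpa using sum_le_card_nsmul Cᶜ _ _ fun v hv =>
      Nat.le_of_lt_succ (hC.nbrsIn_lt (mem_compl.1 hv))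
  have hcount := (mul_card_le_sum_nbrsIn hδ C).trans_eq (sum_add_sum_compl C _).symm
  have hk := card_le_univ C
  rw [card_compl] at hout
  by_contra! h
  obtain ⟨h5, hkd⟩ := h
  have hk1 : ((k - 1 : ℕ) : ℤ) = k - 1 := by omega
  have hnk : ((Fintype.card V - k : ℕ) : ℤ) = Fintype.card V - k := by omega
  have key : ((d : ℤ) + 1) * k ≤ k * (k - 1) + (Fintype.card V - k) * 2 := by
    rw [← hk1, ← hnk]; exact_mod_cast hcount.trans (add_le_add hin hout)
  have hn' : (Fintype.card V : ℤ) ≤ 2 * d + 1 := by exact_mod_cast hn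
  nlinarith [mul_nonneg (by omega : (0 : ℤ) ≤ k - 5) (by omega : (0 : ℤ) ≤ d - 1 - k)]

/-- Otherwise counting the edges at `N(x)` gives `(d + 1)² ≤ 2n - 2 ≤ 4d`. -/
lemma exists_two_le_or_three_le_nbrsIn_neighborFinset (hδ : d + 1 ≤ G.minDegree)
    (hn : Fintype.card V ≤ 2 * d + 1) (hd : 2 ≤ d) (x : V) :
    (∃ y ∈ G.neighborFinset x, 2 ≤ nbrsIn G (G.neighborFinset x) y) ∨
      ∃ z ∉ G.neighborFinset x, z ≠ x ∧ 3 ≤ nbrsIn G (G.neighborFinset x) z := by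
  set N := G.neighborFinset x
  have hxN : x ∉ N := by simp [N]
  have hN : d + 1 ≤ N.card :=
    (G.card_neighborFinset_eq_degree x).symm ▸ hδ.trans (G.minDegree_le_degree x)
  by_contra! h
  obtain ⟨hy, hz⟩ := h
  have hin : ∑ v ∈ N, nbrsIn G N v ≤ N.card := by
    simpa using sum_le_card_nsmul N _ 1 fun v hv => Nat.le_of_lt_succ (hy v hv)
  have hout : ∑ v ∈ Nᶜ.erase x, nbrsIn G N v ≤ (Nᶜ.erase x).card * 2 := by
    simpa using sum_le_card_nsmul _ _ 2 fun v hv =>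
      Nat.le_of_lt_succ (hz v (mem_compl.1 (mem_of_mem_erase hv)) (ne_of_mem_erase hv))
  have hsplit : ∑ v, nbrsIn G N v =
      ∑ v ∈ N, nbrsIn G N v + (nbrsIn G N x + ∑ v ∈ Nᶜ.erase x, nbrsIn G N v) := by
    rw [add_sum_erase _ _ (mem_compl.2 hxN), sum_add_sum_compl]
  have hcount := mul_card_le_sum_nbrsIn hδ N
  have := nbrsIn_le_card (G := G) N x
  have := card_erase_add_one (mem_compl.2 hxN)
  have := card_compl_add_card N
  have : (d + 1) * (d + 1) ≤ (d + 1) * N.card := Nat.mul_le_mul_left _ hN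
  nlinarith

lemma exists_card_eq_three_five_le_card_bootClosure (hδ : d + 1 ≤ G.minDegree)
    (hn : Fintype.card V ≤ 2 * d + 1) (hd : 3 ≤ d) :
    ∃ T : Finset V, T.card = 3 ∧ 5 ≤ (bootClosure G 3 T).card := by
  obtain ⟨x⟩ : Nonempty V := by
    by_contra h
    have : IsEmpty V := not_nonempty_iff.1 h
    simp at hδ
  set N := G.neighborFinset x
  have hadjN : ∀ a ∈ N, G.Adj x a := fun a ha => (G.mem_neighborFinset x a).1 ha
  rcases exists_two_le_or_three_le_nbrsIn_neighborFinset hδ hn (by omega) x with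
    ⟨y, hyN, hy2⟩ | ⟨z, hzN, hzx, hz3⟩
  · obtain ⟨a, ha, b, hb, hab⟩ := one_lt_card.1 hy2
    rw [mem_filter] at ha hb
    obtain ⟨c, hc⟩ : (N \ {a, b, y}).Nonempty := by
      rw [← card_pos]
      have := card_le_card_sdiff_add_card (s := N) (t := {a, b, y})
      have := card_le_three (a := a) (b := b) (c := y)
      have : d + 1 ≤ N.card :=
        (G.card_neighborFinset_eq_degree x).symm ▸ hδ.trans (G.minDegree_le_degree x)
      omega
    simp only [mem_sdiff, mem_insert, mem_singleton, not_or] at hc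
    obtain ⟨hcN, hca, hcb, hcy⟩ := hc
    exact ⟨_, card_eq_three.2 ⟨a, b, c, hab, Ne.symm hca, Ne.symm hcb, rfl⟩,
      five_le_card_bootClosure hab (Ne.symm hca) (Ne.symm hcb) (hadjN a ha.1) (hadjN b hb.1)
        (hadjN c hcN) ha.2 hb.2 (Or.inl (hadjN y hyN).symm) (Ne.symm hcy)
        (G.ne_of_adj (hadjN y hyN)).symm⟩
  · obtain ⟨a, ha, b, hb, c, hc, hab, hac, hbc⟩ := two_lt_card.1 hz3
    rw [mem_filter] at ha hb hc
    exact ⟨_, card_eq_three.2 ⟨a, b, c, hab, hac, hbc, rfl⟩,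
      five_le_card_bootClosure hab hac hbc (hadjN a ha.1) (hadjN b hb.1) (hadjN c hc.1)
        ha.2 hb.2 (Or.inr hc.2) (G.ne_of_adj hc.2) hzx⟩

end dense

section extremal

variable [Fintype V] {d : ℕ}

lemma exists_two_le_nbrsIn (hδ : d + 1 ≤ G.minDegree) (hn : Fintype.card V ≤ 2 * d + 1)
    (hd : 2 ≤ d) {Y : Finset V} (hYd : d ≤ Y.card) (hYc : Yᶜ.Nonempty) :
    ∃ x ∉ Y, 2 ≤ nbrsIn G Y x := by
  have hdeg : ∀ v, d + 1 ≤ G.degree v := fun v => hδ.trans (G.minDegree_le_degree v)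
  have hcard := card_compl_add_card Y
  by_cases hsmall : Yᶜ.card ≤ d
  · obtain ⟨v, hv⟩ := hYc
    refine ⟨v, mem_compl.1 hv, ?_⟩
    have := nbrsIn_lt_card (G := G) hv
    have := nbrsIn_add_nbrsIn_compl (G := G) Y v
    have := hdeg v
    omega
  · -- Now `|Y| = d`, so every vertex of `Y` has two neighbours outside `Y`.
    by_contra! h
    have hout : ∑ v ∈ Yᶜ, nbrsIn G Y v ≤ Yᶜ.card * 1 :=
      sum_le_card_nsmul _ _ 1 fun v hv => Nat.le_of_lt_succ (h v (mem_compl.1 hv))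
    have hin : Y.card * 2 ≤ ∑ y ∈ Y, nbrsIn G Yᶜ y := card_nsmul_le_sum _ _ 2 fun y hy => by
      have := nbrsIn_lt_card (G := G) hy
      have := nbrsIn_add_nbrsIn_compl (G := G) Y y
      have := hdeg y
      omega
    rw [sum_nbrsIn_comm] at hin
    omega

/-- The triple from `exists_card_eq_three_insert_subset_bootClosure` infects a set of size at
least `|Y| + 1 ≥ d + 1`, so if it does not percolate, its closure is exactly `insert x Y`. -/
lemma bootClosed_insert (hδ : d + 1 ≤ G.minDegree)
    (hno : ∀ T : Finset V, T.card = 3 → bootClosure G 3 T ≠ univ)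
    (hn : Fintype.card V ≤ 2 * d + 1) (hd : 6 ≤ d) {Y : Finset V} (hY : BootClosed G 3 Yᶜ)
    (hYd : d ≤ Y.card) (hYc : d ≤ Yᶜ.card) {x : V} (hx : x ∉ Y) (hx2 : 2 ≤ nbrsIn G Y x) :
    Fintype.card V = 2 * d + 1 ∧ Y.card = d ∧ BootClosed G 3 (insert x Y) := by
  have hcard := card_compl_add_card Y
  have hnear : ∀ y ∈ Y, Y.card ≤ nbrsIn G Y y + 2 := fun y hy => by
    have := hY.nbrsIn_lt (notMem_compl.2 hy)
    have := nbrsIn_add_nbrsIn_compl (G := G) Y y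
    have := hδ.trans (G.minDegree_le_degree y)
    omega
  obtain ⟨T, hT, hsub⟩ := exists_card_eq_three_insert_subset_bootClosure (by omega) hnear hx hx2
  have hC := bootClosed_bootClosure (G := G) (r := 3) T
  have hle := hC.card_add_le hδ (hno T hT)
  have hge := card_le_card hsub
  rw [card_insert_of_notMem hx] at hge
  refine ⟨by omega, by omega, ?_⟩
  rwa [eq_of_subset_of_card_le hsub (by rw [card_insert_of_notMem hx]; omega)]

/-- Each vertex of `Y` has two neighbours in `Yᶜ`, and each vertex of `X = (insert x Y)ᶜ` has two
in `insert x Y`; comparing the two counts of the edges between `X` and `Y` leaves the edges at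
`x`. -/
lemma nbrsIn_eq_nbrsIn_compl_insert (hδ : d + 1 ≤ G.minDegree)
    (hn : Fintype.card V = 2 * d + 1) {Y : Finset V} (hY : BootClosed G 3 Yᶜ) (hYd : Y.card = d)
    {x : V} (hx : x ∉ Y) (hC : BootClosed G 3 (insert x Y)) :
    nbrsIn G Y x = nbrsIn G (insert x Y)ᶜ x := by
  have hXd : (insert x Y)ᶜ.card = d := by have := card_compl_insert hx; omega
  set X := (insert x Y)ᶜ
  have hYY : ∑ y ∈ Y, nbrsIn G Yᶜ y = Y.card * 2 := sum_const_nat fun y hy =>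
    hY.nbrsIn_eq_two hδ (by rw [compl_compl]; omega) (notMem_compl.2 hy)
  have hXX : ∑ u ∈ X, nbrsIn G (insert x Y) u = X.card * 2 := sum_const_nat fun u hu =>
    hC.nbrsIn_eq_two hδ hXd.le (mem_compl.1 hu)
  have hXY : ∑ y ∈ Y, nbrsIn G Yᶜ y = nbrsIn G Y x + ∑ u ∈ X, nbrsIn G Y u := by
    have hYc : Yᶜ.erase x = X := by ext; simp [X]
    rw [sum_nbrsIn_comm, ← add_sum_erase _ _ (mem_compl.2 hx), hYc]
  have hXx : ∑ u ∈ X, nbrsIn G (insert x Y) u = ∑ u ∈ X, nbrsIn G Y u + nbrsIn G X x := by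
    simp only [nbrsIn_insert hx, sum_add_distrib, sum_boole, G.adj_comm _ x]
    rfl
  omega

/-- Two non-neighbours `u, u'` of `x` in `(insert x Y)ᶜ` have two neighbours in `Y` each; then
`insert u Y` is closed, yet `u'` has three neighbours in it. -/
lemma card_filter_not_adj_compl_insert_le_one (hδ : d + 1 ≤ G.minDegree)
    (hno : ∀ T : Finset V, T.card = 3 → bootClosure G 3 T ≠ univ) (hd : 6 ≤ d)
    (hn : Fintype.card V = 2 * d + 1) {Y : Finset V} (hY : BootClosed G 3 Yᶜ) (hYd : Y.card = d)
    {x : V} (hx : x ∉ Y) (hC : BootClosed G 3 (insert x Y)) :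
    ((insert x Y)ᶜ.filter (fun u => ¬ G.Adj x u)).card ≤ 1 := by
  have hXd : (insert x Y)ᶜ.card = d := by have := card_compl_insert hx; omega
  have hY2 : ∀ u ∈ (insert x Y)ᶜ, ¬ G.Adj x u → nbrsIn G Y u = 2 := fun u hu hxu => by
    have := hC.nbrsIn_eq_two hδ hXd.le (mem_compl.1 hu)
    rwa [nbrsIn_insert hx, if_neg fun h => hxu h.symm, add_zero] at this
  by_contra! h
  obtain ⟨u, hu, u', hu', huu'⟩ := one_lt_card.1 h
  rw [mem_filter] at hu hu'
  have huY : u ∉ Y := fun h => mem_compl.1 hu.1 (mem_insert_of_mem h)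
  have hu'Y : u' ∉ Y := fun h => mem_compl.1 hu'.1 (mem_insert_of_mem h)
  have hCu := (bootClosed_insert hδ hno hn.le hd hY hYd.ge
    (by have := card_compl_add_card Y; omega) huY (hY2 u hu.1 hu.2).ge).2.2
  have hadj : G.Adj u' u := hC.isClique_compl hδ hXd.le hu'.1 hu.1 (Ne.symm huu')
  have := hCu.nbrsIn_lt (by simp [Ne.symm huu', hu'Y] : u' ∉ insert u Y)
  rw [nbrsIn_insert huY, if_pos hadj, hY2 u' hu'.1 hu'.2] at this
  omega

/-- Otherwise every neighbour of `x` in `(insert x Y)ᶜ` has its only neighbour in `Y` among the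
at most one non-neighbour of `x` in `Y`, which then has `d - 1 > 2` neighbours outside `Y`. -/
lemma exists_adj_of_bootClosed_insert (hδ : d + 1 ≤ G.minDegree) (hd : 4 ≤ d)
    (hn : Fintype.card V = 2 * d + 1) {Y : Finset V} (hY : BootClosed G 3 Yᶜ) (hYd : Y.card = d)
    {x : V} (hx : x ∉ Y) (hC : BootClosed G 3 (insert x Y))
    (hxX : d - 1 ≤ nbrsIn G (insert x Y)ᶜ x) (hxY : d - 1 ≤ nbrsIn G Y x) :
    ∃ u ∈ (insert x Y)ᶜ, G.Adj x u ∧ ∃ w ∈ Y, G.Adj u w ∧ G.Adj x w := by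
  have hXd : (insert x Y)ᶜ.card = d := by have := card_compl_insert hx; omega
  by_contra! h
  set S := (insert x Y)ᶜ.filter (fun u => G.Adj x u)
  have hY₀ : (Y.filter (fun w => ¬ G.Adj x w)).card ≤ 1 := by
    have := card_filter_add_card_filter_not (s := Y) (fun w => G.Adj x w)
    unfold nbrsIn at hxY
    omega
  set Y₀ := Y.filter (fun w => ¬ G.Adj x w)
  have hS : ∀ u ∈ S, 1 ≤ nbrsIn G Y₀ u := fun u hu => by
    rw [mem_filter] at hu
    have h2 := hC.nbrsIn_eq_two hδ hXd.le (mem_compl.1 hu.1)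
    rw [nbrsIn_insert hx, if_pos hu.2.symm] at h2
    obtain ⟨w, hw⟩ := card_pos.1 (show 0 < nbrsIn G Y u by omega)
    rw [mem_filter] at hw
    exact card_pos.2 ⟨w, mem_filter.2 ⟨mem_filter.2 ⟨hw.1, h u hu.1 hu.2 w hw.1 hw.2⟩, hw.2⟩⟩
  have hY₀S : ∀ y ∈ Y₀, nbrsIn G S y ≤ 2 := fun y hy =>
    Nat.le_of_lt_succ <| (nbrsIn_mono ((filter_subset _ _).trans
      (compl_subset_compl.2 (subset_insert x Y))) y).trans_lt
      (hY.nbrsIn_lt (notMem_compl.2 (mem_filter.1 hy).1))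
  have hlow : S.card * 1 ≤ ∑ u ∈ S, nbrsIn G Y₀ u := card_nsmul_le_sum _ _ 1 hS
  have hup : ∑ y ∈ Y₀, nbrsIn G S y ≤ Y₀.card * 2 := sum_le_card_nsmul _ _ 2 hY₀S
  rw [sum_nbrsIn_comm] at hlow
  change d - 1 ≤ S.card at hxX
  omega

/-- With `X = (insert x Y)ᶜ`, `x` has `d - 1` neighbours in `X`, hence also in `Y`, and some
neighbour `u ∈ X` of `x` shares a neighbour `w ∈ Y` with `x`; a triple of `x`, `u` and a vertex of
`Y` then infects `Y ∪ {x, u}`, which has `d + 2 > n - d` vertices. -/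
lemma exists_percolating_of_bootClosed_insert (hδ : d + 1 ≤ G.minDegree) (hd : 6 ≤ d)
    (hn : Fintype.card V = 2 * d + 1) {Y : Finset V} (hY : BootClosed G 3 Yᶜ) (hYd : Y.card = d)
    {x : V} (hx : x ∉ Y) (hC : BootClosed G 3 (insert x Y)) :
    ∃ T : Finset V, T.card = 3 ∧ bootClosure G 3 T = univ := by
  by_contra! hno
  have hxX : d - 1 ≤ nbrsIn G (insert x Y)ᶜ x := by
    have := card_filter_not_adj_compl_insert_le_one hδ hno hd hn hY hYd hx hC
    have := card_filter_add_card_filter_not (s := (insert x Y)ᶜ) (fun u => G.Adj x u)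
    have := card_compl_insert hx
    unfold nbrsIn
    omega
  have hxY := (nbrsIn_eq_nbrsIn_compl_insert hδ hn hY hYd hx hC).symm ▸ hxX
  obtain ⟨u, hu, hxu, w, hw, huw, hxw⟩ :=
    exists_adj_of_bootClosed_insert hδ (by omega) hn hY hYd hx hC hxX hxY
  have huY : u ∉ Y := fun h => mem_compl.1 hu (mem_insert_of_mem h)
  have hYclique : G.IsClique (Y : Set V) := by
    simpa using hY.isClique_compl hδ (by rw [compl_compl]; omega)
  obtain ⟨T, hT, hsub⟩ := exists_card_eq_three_insert_insert_subset_bootClosure hYclique hx huY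
    (G.ne_of_adj hxu) hw hxw huw (by omega)
  have hle := (bootClosed_bootClosure T).card_add_le hδ (hno T hT)
  have hge := card_le_card hsub
  rw [card_insert_of_notMem (by simp [G.ne_of_adj hxu, hx]), card_insert_of_notMem huY] at hge
  omega

lemma exists_percolating_of_bootClosed_compl (hδ : d + 1 ≤ G.minDegree)
    (hn : Fintype.card V ≤ 2 * d + 1) (hd : 6 ≤ d) {Y : Finset V} (hY : BootClosed G 3 Yᶜ)
    (hYd : d ≤ Y.card) (hYc : d ≤ Yᶜ.card) :
    ∃ T : Finset V, T.card = 3 ∧ bootClosure G 3 T = univ := by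
  by_contra! hno
  obtain ⟨x, hx, hx2⟩ := exists_two_le_nbrsIn hδ hn (by omega) hYd (card_pos.1 (by omega))
  obtain ⟨hn', hYd', hC⟩ := bootClosed_insert hδ hno hn hd hY hYd hYc hx hx2
  obtain ⟨T, hT, hperc⟩ := exists_percolating_of_bootClosed_insert hδ hd hn' hY hYd' hx hC
  exact hno T hT hperc

lemma exists_card_eq_three_bootClosure_eq_univ (hδ : d + 1 ≤ G.minDegree)
    (hn : Fintype.card V ≤ 2 * d + 1) (hd : 8 ≤ d) :
    ∃ T : Finset V, T.card = 3 ∧ bootClosure G 3 T = univ := by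
  by_contra! hno
  obtain ⟨T, hT, h5⟩ := exists_card_eq_three_five_le_card_bootClosure hδ hn (by omega)
  have hA := bootClosed_bootClosure (G := G) (r := 3) T
  have hAd := (hA.card_le_four_or_le_card hδ hn hd).resolve_left (by omega)
  have hAc : d ≤ (bootClosure G 3 T)ᶜ.card := by
    have := hA.card_add_le hδ (hno T hT)
    have := card_compl_add_card (bootClosure G 3 T)
    omega
  rw [← compl_compl (bootClosure G 3 T)] at hA hAd
  obtain ⟨T', hT', hperc⟩ := exists_percolating_of_bootClosed_compl hδ hn (by omega) hA hAc hAd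
  exact hno T' hT' hperc

end extremal

end

theorem stmt_12 {V : Type*} [Fintype V] (G : SimpleGraph V) (n : ℕ)
    (hn : Fintype.card V = n) (h30 : 30 ≤ n) (hδ : n / 2 + 1 ≤ G.minDegree) :
    minPerc G 3 = 3 := by
  obtain ⟨T, hT, hperc⟩ :=
    exists_card_eq_three_bootClosure_eq_univ hδ (by omega : Fintype.card V ≤ 2 * (n / 2) + 1)
      (by omega)
  exact le_antisymm ((minPerc_le hperc).trans_eq hT) (le_minPerc (by omega))
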